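/- arXiv:2310.16506 — 3 statements merged into one kernel-verified Lean document; each statement's English description precedes it below -/
import Mathlib

section
/- In the constructed weighted argumentation graph with all initial weights equal to 1, if some similar individual e_i ∈ S has a classification different from that of the queried individual e0 and differs from e0 on an attribute z (i.e. f(e_i) ≠ f(e0) and v(e_i, z) ≠ v(e0, z)), then the weighted h-Categorizer weight of the queried individual's pair strictly drops below 1: s((z, v(e0, z)))^{(n)} < 1 for every n ≥ 2. -/
/-- In the constructed weighted argumentation graph with all initial weights
equal to 1, if some similar individual `ei ∈ S` has a classification different from that
of the queried individual `e0` and differs from `e0` on an attribute `z`, then the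
weighted h-Categorizer weight of the queried individual's pair strictly drops below 1:
`s((z, v(e0,z)))⁽ⁿ⁾ < 1` for every `n ≥ 2`. -/
theorem hCategorizer_attacked_queried_pair_drops
    {Z V : Type*} [Fintype Z] [Nonempty Z] [DecidableEq Z] [DecidableEq V]
    (e0 : Z → V) (S : Finset (Z → V)) (hk : 1 ≤ S.card) (he0 : e0 ∉ S)
    (f : (Z → V) → Bool)
    (A : Finset (Z × V))
    (hA : A = (insert e0 S).biUnion (fun e => Finset.univ.image (fun z => (z, e z))))
    (R : Z × V → Z × V → Prop) [DecidableRel R]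
    (hR : ∀ a b, R a b ↔
      ∃ ei ∈ S, f ei ≠ f e0 ∧ a.2 = ei a.1 ∧ b.2 = e0 b.1 ∧ ei b.1 ≠ e0 b.1)
    (π : Z × V → Z × V → ℝ)
    (hπ : ∀ a b, R a b → π a b =
      ((S.filter (fun ei => ei a.1 = a.2 ∧ e0 b.1 ≠ ei b.1)).card : ℝ) / (S.card : ℝ))
    (hπ0 : ∀ a b, ¬ R a b → π a b = 0)
    (s : ℕ → Z × V → ℝ)
    (hs1 : ∀ a, s 1 a = 1)
    (hsrec : ∀ n ≥ 1, ∀ a, s (n + 1) a =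
      1 / (1 + ∑ b ∈ A.filter (fun b => R b a), π b a * s n b)) :
    ∀ z : Z, (∃ ei ∈ S, f ei ≠ f e0 ∧ ei z ≠ e0 z) →
      ∀ n ≥ 2, s n (z, e0 z) < 1 := by
  have hπnn : ∀ a b, 0 ≤ π a b := by
    intro a b
    by_cases h : R a b
    · rw [hπ a b h]; positivity
    · rw [hπ0 a b h]
  have hpos : ∀ n, 1 ≤ n → ∀ a, 0 < s n a := by
    intro n hn
    induction n, hn using Nat.le_induction with
    | base => intro a; rw [hs1]; norm_num
    | succ m hm ih =>
      intro a
      rw [hsrec m hm a]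
      have hsum : 0 ≤ ∑ b ∈ A.filter (fun b => R b a), π b a * s m b :=
        Finset.sum_nonneg fun b _ => mul_nonneg (hπnn b a) (le_of_lt (ih b))
      have : (0:ℝ) < 1 + ∑ b ∈ A.filter (fun b => R b a), π b a * s m b := by linarith
      positivity
  rintro z ⟨ei, hei, hf, hz⟩ n hn
  obtain ⟨m, rfl⟩ : ∃ m, n = m + 1 := ⟨n - 1, by omega⟩
  have hm : 1 ≤ m := by omega
  rw [hsrec m hm]
  set a : Z × V := (z, e0 z)
  set b0 : Z × V := (z, ei z)
  have hb0R : R b0 a := (hR b0 a).mpr ⟨ei, hei, hf, rfl, rfl, hz⟩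
  have hb0A : b0 ∈ A := by
    rw [hA, Finset.mem_biUnion]
    exact ⟨ei, Finset.mem_insert_of_mem hei, Finset.mem_image.mpr ⟨z, Finset.mem_univ z, rfl⟩⟩
  have hb0mem : b0 ∈ A.filter (fun b => R b a) := Finset.mem_filter.mpr ⟨hb0A, hb0R⟩
  have hπpos : 0 < π b0 a := by
    rw [hπ b0 a hb0R]
    apply div_pos
    · have : ei ∈ S.filter (fun ei' => ei' b0.1 = b0.2 ∧ e0 a.1 ≠ ei' a.1) :=
        Finset.mem_filter.mpr ⟨hei, rfl, Ne.symm hz⟩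
      have := Finset.card_pos.mpr ⟨ei, this⟩
      exact_mod_cast this
    · exact_mod_cast Nat.lt_of_lt_of_le Nat.zero_lt_one hk
  have hsumpos : 0 < ∑ b ∈ A.filter (fun b => R b a), π b a * s m b := by
    apply Finset.sum_pos'
    · intro b _; exact mul_nonneg (hπnn b a) (le_of_lt (hpos m hm b))
    · exact ⟨b0, hb0mem, mul_pos hπpos (hpos m hm b0)⟩
  rw [div_lt_one (by linarith)]
  linarith
end

section
/- (Proposition 3) Suppose there is a single attribute z* ∈ Z such that: (i) every similar individual e_i ∈ S agrees with the queried individual e0 on all attributes other than z*, i.e. v(e_i, z) = v(e0, z) for all z ≠ z*; (ii) every similar individual e_i ∈ S with f(e_i) ≠ f(e0) satisfies v(e_i, z*) ≠ v(e0, z*); and (iii) at least one e_i ∈ S has f(e_i) ≠ f(e0). Let a* = (z*, v(e0, z*)). Then under the weighted h-Categorizer semantics, s(a*)^{(n)} < 1 for every n ≥ 2, while s(b)^{(n)} = 1 for every argument b ≠ a* and every n ≥ 1; in particular, for every n ≥ 2, a* is the unique argument of minimal weight. -/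
/-- Proposition 3: Suppose there is a single attribute `z*` such that (i)
every similar individual agrees with `e0` on all attributes other than `z*`, (ii) every
similar individual classified differently from `e0` differs from `e0` on `z*`, and (iii)
at least one similar individual is classified differently from `e0`. Let
`a* = (z*, v(e0, z*))`. Then `s(a*)⁽ⁿ⁾ < 1` for every `n ≥ 2`, while `s(b)⁽ⁿ⁾ = 1` for
every argument `b ≠ a*` and every `n ≥ 1`; in particular, for every `n ≥ 2`, `a*` is the
unique argument of minimal weight. -/
theorem hCategorizer_single_differing_attribute
    {Z V : Type*} [Fintype Z] [Nonempty Z] [DecidableEq Z] [DecidableEq V]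
    (e0 : Z → V) (S : Finset (Z → V)) (hk : 1 ≤ S.card) (he0 : e0 ∉ S)
    (f : (Z → V) → Bool)
    (A : Finset (Z × V))
    (hA : A = (insert e0 S).biUnion (fun e => Finset.univ.image (fun z => (z, e z))))
    (R : Z × V → Z × V → Prop) [DecidableRel R]
    (hR : ∀ a b, R a b ↔
      ∃ ei ∈ S, f ei ≠ f e0 ∧ a.2 = ei a.1 ∧ b.2 = e0 b.1 ∧ ei b.1 ≠ e0 b.1)
    (π : Z × V → Z × V → ℝ)
    (hπ : ∀ a b, R a b → π a b =
      ((S.filter (fun ei => ei a.1 = a.2 ∧ e0 b.1 ≠ ei b.1)).card : ℝ) / (S.card : ℝ))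
    (hπ0 : ∀ a b, ¬ R a b → π a b = 0)
    (s : ℕ → Z × V → ℝ)
    (hs1 : ∀ a, s 1 a = 1)
    (hsrec : ∀ n ≥ 1, ∀ a, s (n + 1) a =
      1 / (1 + ∑ b ∈ A.filter (fun b => R b a), π b a * s n b))
    (zstar : Z)
    (hagree : ∀ ei ∈ S, ∀ z : Z, z ≠ zstar → ei z = e0 z)
    (hdiff : ∀ ei ∈ S, f ei ≠ f e0 → ei zstar ≠ e0 zstar)
    (hex : ∃ ei ∈ S, f ei ≠ f e0) :
    (∀ n ≥ 2, s n (zstar, e0 zstar) < 1) ∧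
    (∀ b ∈ A, b ≠ (zstar, e0 zstar) → ∀ n ≥ 1, s n b = 1) ∧
    (∀ n ≥ 2, ∀ b ∈ A, b ≠ (zstar, e0 zstar) → s n (zstar, e0 zstar) < s n b) := by
  obtain ⟨ei0, hei0, hf0⟩ := hex
  set astar : Z × V := (zstar, e0 zstar) with hastar
  -- no argument other than a* is attacked
  have hnoatk : ∀ b : Z × V, b ≠ astar → ∀ b', ¬ R b' b := by
    intro b hb b' hRb
    rw [hR] at hRb
    obtain ⟨ei, hei, hf, h1, h2, h3⟩ := hRb
    by_cases hz : b.1 = zstar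
    · exact hb (Prod.ext hz (by rw [h2, hz]))
    · exact h3 (hagree ei hei b.1 hz)
  -- any b ≠ a* has weight 1 at all n ≥ 1
  have hone : ∀ b : Z × V, b ≠ astar → ∀ n, 1 ≤ n → s n b = 1 := by
    intro b hb n hn
    induction n with
    | zero => omega
    | succ m ih =>
      rcases Nat.lt_or_ge m 1 with hm | hm
      · interval_cases m
        exact hs1 b
      · rw [hsrec m hm b]
        have hfe : A.filter (fun b' => R b' b) = ∅ := by
          apply Finset.filter_eq_empty_iff.mpr
          intro b' _
          exact hnoatk b hb b'
        rw [hfe]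
        simp
  -- attackers of a* are ≠ a*
  have hatk_ne : ∀ b', R b' astar → b' ≠ astar := by
    intro b' hRb hbe
    rw [hR] at hRb
    obtain ⟨ei, hei, hf, h1, h2, h3⟩ := hRb
    rw [hbe] at h1
    exact h3 h1.symm
  -- the witness attacker
  set a0 : Z × V := (zstar, ei0 zstar) with ha0
  have hRa0 : R a0 astar := by
    rw [hR]
    exact ⟨ei0, hei0, hf0, rfl, rfl, hdiff ei0 hei0 hf0⟩
  have ha0A : a0 ∈ A := by
    rw [hA]
    apply Finset.mem_biUnion.mpr
    exact ⟨ei0, Finset.mem_insert_of_mem hei0, Finset.mem_image.mpr ⟨zstar, Finset.mem_univ _, rfl⟩⟩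
  have hπpos : 0 < π a0 astar := by
    rw [hπ a0 astar hRa0]
    apply div_pos
    · have : ei0 ∈ S.filter (fun ei => ei a0.1 = a0.2 ∧ e0 astar.1 ≠ ei astar.1) := by
        apply Finset.mem_filter.mpr
        exact ⟨hei0, rfl, (hdiff ei0 hei0 hf0).symm⟩
      have := Finset.card_pos.mpr ⟨ei0, this⟩
      exact_mod_cast this
    · exact_mod_cast Nat.lt_of_lt_of_le Nat.zero_lt_one hk
  have hπnn : ∀ b, 0 ≤ π b astar := by
    intro b
    by_cases hRb : R b astar
    · rw [hπ b astar hRb]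
      positivity
    · rw [hπ0 b astar hRb]
  -- main bound
  have hlt : ∀ n, 2 ≤ n → s n astar < 1 := by
    intro n hn
    obtain ⟨m, rfl⟩ : ∃ m, n = m + 1 := ⟨n - 1, by omega⟩
    have hm : 1 ≤ m := by omega
    rw [hsrec m hm astar]
    have hsum : 0 < ∑ b ∈ A.filter (fun b => R b astar), π b astar * s m b := by
      apply Finset.sum_pos'
      · intro b hb
        have hRb := (Finset.mem_filter.mp hb).2
        rw [hone b (hatk_ne b hRb) m hm]
        simpa using hπnn b
      · refine ⟨a0, Finset.mem_filter.mpr ⟨ha0A, hRa0⟩, ?_⟩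
        rw [hone a0 (hatk_ne a0 hRa0) m hm]
        simpa using hπpos
    rw [div_lt_one (by linarith)]
    linarith
  refine ⟨hlt, fun b _ hb n hn => hone b hb n hn, fun n hn b _ hb => ?_⟩
  rw [hone b hb n (by omega)]
  exact hlt n hn
end

section
/- For every weighted argumentation graph with a finite set of arguments, initial weights in [0,1], and attack strengths in [0,1], the weighted h-Categorizer sequence converges: for every argument a, the sequence (s(a)^{(n)})_{n ≥ 1} has a limit in [0,1] as n → ∞. -/
/-!
The update map `F x a = σ a / (1 + ∑ b, w b a * x b)` is antitone on nonnegative vectors, so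
`F ∘ F` is monotone and the even iterates `F^[2k] σ` decrease to a limit `x`; by continuity the
odd iterates tend to `F x`, and `(x, F x)` is a 2-cycle of `F`.

A 2-cycle `(u, v)` is a fixed point. With `S` the attack sum,
`u a - v a = u a * (S u a - S v a) / (1 + S u a)`, and `S u a - S v a` is the attack sum of
`u - v`. Hence `u - v ≤ r • u` implies `u - v ≤ (c * r) • u` with `c = T / (1 + T) < 1`, where
`T` bounds every attack sum of `σ`. Starting from `r = 1` this gives `u ≤ v`, and symmetrically
`v ≤ u`.
-/

open Filter Topology Finset

theorem tendsto_of_tendsto_even_of_tendsto_odd {X : Type*} {f : ℕ → X} {l : Filter X}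
    (h₀ : Tendsto (fun k => f (2 * k)) atTop l) (h₁ : Tendsto (fun k => f (2 * k + 1)) atTop l) :
    Tendsto f atTop l := by
  intro s hs
  obtain ⟨N₀, hN₀⟩ := eventually_atTop.1 (h₀ hs)
  obtain ⟨N₁, hN₁⟩ := eventually_atTop.1 (h₁ hs)
  refine eventually_atTop.2 ⟨2 * (N₀ + N₁), fun n hn => ?_⟩
  obtain ⟨k, rfl | rfl⟩ := Nat.even_or_odd' n
  · exact hN₀ k (by omega)
  · exact hN₁ k (by omega)

theorem nonpos_of_forall_le_pow_mul {c d u : ℝ} (hc₀ : 0 ≤ c) (hc₁ : c < 1)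
    (h : ∀ k : ℕ, d ≤ c ^ k * u) : d ≤ 0 := by
  simpa using ge_of_tendsto' ((tendsto_pow_atTop_nhds_zero_of_lt_one hc₀ hc₁).mul_const u) h

namespace HCategorizer

variable {A : Type*} [Fintype A]

def attackSum (w : A → A → ℝ) (x : A → ℝ) (a : A) : ℝ :=
  ∑ b, w b a * x b

noncomputable def step (σ : A → ℝ) (w : A → A → ℝ) (x : A → ℝ) : A → ℝ :=
  fun a => σ a / (1 + attackSum w x a)

variable {σ x y : A → ℝ} {w : A → A → ℝ}

theorem attackSum_nonneg (hw : ∀ a b, 0 ≤ w a b) (hx : 0 ≤ x) (a : A) :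
    0 ≤ attackSum w x a :=
  sum_nonneg fun b _ => mul_nonneg (hw b a) (hx b)

theorem attackSum_mono (hw : ∀ a b, 0 ≤ w a b) (hxy : x ≤ y) (a : A) :
    attackSum w x a ≤ attackSum w y a :=
  sum_le_sum fun b _ => mul_le_mul_of_nonneg_left (hxy b) (hw b a)

theorem attackSum_sub (w : A → A → ℝ) (x y : A → ℝ) (a : A) :
    attackSum w x a - attackSum w y a = attackSum w (x - y) a := by
  simp only [attackSum, Pi.sub_apply, mul_sub, sum_sub_distrib]

theorem attackSum_smul (w : A → A → ℝ) (r : ℝ) (x : A → ℝ) (a : A) :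
    attackSum w (r • x) a = r * attackSum w x a := by
  simp only [attackSum, Pi.smul_apply, smul_eq_mul, mul_sum, mul_left_comm]

theorem continuous_attackSum (w : A → A → ℝ) (a : A) :
    Continuous fun x => attackSum w x a := by
  unfold attackSum
  fun_prop

theorem step_nonneg (hσ : 0 ≤ σ) (hw : ∀ a b, 0 ≤ w a b) (hx : 0 ≤ x) : 0 ≤ step σ w x :=
  fun a => div_nonneg (hσ a) (by linarith [attackSum_nonneg hw hx a])

theorem step_le (hσ : 0 ≤ σ) (hw : ∀ a b, 0 ≤ w a b) (hx : 0 ≤ x) : step σ w x ≤ σ :=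
  fun a => div_le_self (hσ a) (by linarith [attackSum_nonneg hw hx a])

theorem step_le_step (hσ : 0 ≤ σ) (hw : ∀ a b, 0 ≤ w a b) (hx : 0 ≤ x) (hxy : x ≤ y) :
    step σ w y ≤ step σ w x := fun a =>
  div_le_div_of_nonneg_left (hσ a) (by linarith [attackSum_nonneg hw hx a])
    (by linarith [attackSum_mono hw hxy a])

theorem continuousAt_step (hw : ∀ a b, 0 ≤ w a b) (hx : 0 ≤ x) : ContinuousAt (step σ w) x :=
  continuousAt_pi.2 fun a => continuousAt_const.div
    (continuousAt_const.add (continuous_attackSum w a).continuousAt)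
    (by linarith [attackSum_nonneg hw hx a])

theorem iterate_step_nonneg (hσ : 0 ≤ σ) (hw : ∀ a b, 0 ≤ w a b) (n : ℕ) :
    0 ≤ (step σ w)^[n] σ := by
  induction n with
  | zero => exact hσ
  | succ n ih =>
    rw [Function.iterate_succ_apply']
    exact step_nonneg hσ hw ih

theorem iterate_two_mul_succ_step (σ : A → ℝ) (w : A → A → ℝ) (k : ℕ) :
    (step σ w)^[2 * (k + 1)] σ = step σ w (step σ w ((step σ w)^[2 * k] σ)) := by
  rw [show 2 * (k + 1) = 2 * k + 1 + 1 by ring, Function.iterate_succ_apply',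
    Function.iterate_succ_apply']

theorem antitone_iterate_two_mul_step (hσ : 0 ≤ σ) (hw : ∀ a b, 0 ≤ w a b) :
    Antitone fun k => (step σ w)^[2 * k] σ := by
  have hnonneg := iterate_step_nonneg hσ hw
  refine antitone_nat_of_succ_le fun k => ?_
  induction k with
  | zero => exact step_le hσ hw (step_nonneg hσ hw hσ)
  | succ k ih =>
    simpa only [iterate_two_mul_succ_step] using
      step_le_step hσ hw (step_nonneg hσ hw (hnonneg _)) (step_le_step hσ hw (hnonneg _) ih)

theorem sub_le_mul_of_step_cycle (hσ : 0 ≤ σ) (hw : ∀ a b, 0 ≤ w a b) {T : ℝ}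
    (hT : ∀ a, attackSum w σ a ≤ T) (hx : 0 ≤ x) (hy : 0 ≤ y)
    (hxy : step σ w y = x) (hyx : step σ w x = y) {r : ℝ} (hr : 0 ≤ r)
    (h : x - y ≤ r • x) : x - y ≤ (T / (1 + T) * r) • x := by
  intro a
  set p := attackSum w x a
  set q := attackSum w y a
  have hp : 0 ≤ p := attackSum_nonneg hw hx a
  have hq : 0 ≤ q := attackSum_nonneg hw hy a
  have hpT : p ≤ T := (attackSum_mono hw (hxy ▸ step_le hσ hw hy) a).trans (hT a)
  have hpq : p - q ≤ r * p := by
    rw [attackSum_sub, ← attackSum_smul]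
    exact attackSum_mono hw h a
  have hcycle : x a - y a = x a * (p - q) / (1 + p) := by
    have hxa : x a = σ a / (1 + q) := by rw [← hxy]; rfl
    have hya : y a = σ a / (1 + p) := by rw [← hyx]; rfl
    rw [hya, hxa]
    field_simp
    ring
  have hratio : p / (1 + p) ≤ T / (1 + T) := by
    rw [div_le_div_iff₀ (by linarith) (by linarith)]
    linarith
  calc (x - y) a = x a * (p - q) / (1 + p) := hcycle
    _ ≤ x a * (r * p) / (1 + p) := by gcongr; exact hx a
    _ = r * x a * (p / (1 + p)) := by ring
    _ ≤ r * x a * (T / (1 + T)) := by gcongr; exact mul_nonneg hr (hx a)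
    _ = ((T / (1 + T) * r) • x) a := by simp only [Pi.smul_apply, smul_eq_mul]; ring

theorem le_of_step_cycle (hσ : 0 ≤ σ) (hw : ∀ a b, 0 ≤ w a b) (hx : 0 ≤ x) (hy : 0 ≤ y)
    (hxy : step σ w y = x) (hyx : step σ w x = y) : x ≤ y := by
  set T := ∑ a, attackSum w σ a
  have hT : ∀ a, attackSum w σ a ≤ T := fun a =>
    single_le_sum (fun a _ => attackSum_nonneg hw hσ a) (mem_univ a)
  have hT₀ : 0 ≤ T := sum_nonneg fun a _ => attackSum_nonneg hw hσ a
  have hcontract : ∀ k : ℕ, x - y ≤ (T / (1 + T)) ^ k • x := by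
    intro k
    induction k with
    | zero => rw [pow_zero, one_smul]; exact sub_le_self x hy
    | succ k ih =>
      rw [pow_succ']
      exact sub_le_mul_of_step_cycle hσ hw hT hx hy hxy hyx (by positivity) ih
  intro a
  exact sub_nonpos.1 <| nonpos_of_forall_le_pow_mul (by positivity)
    ((div_lt_one (by linarith)).2 (by linarith)) fun k => hcontract k a

theorem eq_of_step_cycle (hσ : 0 ≤ σ) (hw : ∀ a b, 0 ≤ w a b) (hx : 0 ≤ x) (hy : 0 ≤ y)
    (hxy : step σ w y = x) (hyx : step σ w x = y) : x = y :=
  le_antisymm (le_of_step_cycle hσ hw hx hy hxy hyx) (le_of_step_cycle hσ hw hy hx hyx hxy)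

theorem tendsto_iterate_step (hσ : 0 ≤ σ) (hw : ∀ a b, 0 ≤ w a b) :
    ∃ x, 0 ≤ x ∧ x ≤ σ ∧ Tendsto (fun n => (step σ w)^[n] σ) atTop (𝓝 x) := by
  have hanti := antitone_iterate_two_mul_step hσ hw
  have hnonneg := iterate_step_nonneg hσ hw
  obtain ⟨x, heven⟩ : ∃ x, Tendsto (fun k => (step σ w)^[2 * k] σ) atTop (𝓝 x) :=
    ⟨_, tendsto_atTop_ciInf hanti ⟨0, by rintro _ ⟨k, rfl⟩; exact hnonneg _⟩⟩
  have hx : 0 ≤ x := ge_of_tendsto' heven fun k => hnonneg _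
  have hodd : Tendsto (fun k => (step σ w)^[2 * k + 1] σ) atTop (𝓝 (step σ w x)) := by
    simpa only [Function.iterate_succ_apply', Function.comp_def] using
      (continuousAt_step hw hx).tendsto.comp heven
  have hshift :
      Tendsto (fun k => (step σ w)^[2 * (k + 1)] σ) atTop (𝓝 (step σ w (step σ w x))) := by
    simpa only [iterate_two_mul_succ_step, Function.iterate_succ_apply', Function.comp_def] using
      (continuousAt_step hw (step_nonneg hσ hw hx)).tendsto.comp hodd
  have hcycle : step σ w (step σ w x) = x :=
    tendsto_nhds_unique hshift ((tendsto_add_atTop_iff_nat 1).2 heven)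
  have hfix : step σ w x = x := eq_of_step_cycle hσ hw (step_nonneg hσ hw hx) hx rfl hcycle
  refine ⟨x, hx, by simpa using hanti.le_of_tendsto heven 0, ?_⟩
  exact tendsto_of_tendsto_even_of_tendsto_odd heven (hfix ▸ hodd)

end HCategorizer

open HCategorizer in
theorem hCategorizer_converges_general
    {A : Type*} [Fintype A]
    (σ : A → ℝ) (hσ : ∀ a, σ a ∈ Set.Icc (0 : ℝ) 1)
    (R : A → A → Prop) [DecidableRel R]
    (π : A → A → ℝ) (hπ : ∀ a b, π a b ∈ Set.Icc (0 : ℝ) 1)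
    (hπ0 : ∀ a b, ¬ R a b → π a b = 0)
    (s : ℕ → A → ℝ)
    (hs1 : ∀ a, s 1 a = σ a)
    (hsrec : ∀ n ≥ 1, ∀ a, s (n + 1) a =
      σ a / (1 + ∑ b ∈ Finset.univ.filter (fun b => R b a), π b a * s n b)) :
    ∀ a, ∃ L ∈ Set.Icc (0 : ℝ) 1,
      Filter.Tendsto (fun n => s n a) Filter.atTop (nhds L) := by
  have hattack : ∀ x a, ∑ b ∈ univ.filter (fun b => R b a), π b a * x b = attackSum π x a :=
    fun x a => sum_filter_of_ne fun b _ hb => by_contra fun hR => hb (by rw [hπ0 b a hR, zero_mul])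
  have hiter : ∀ n, s (n + 1) = (step σ π)^[n] σ := by
    intro n
    induction n with
    | zero => exact funext hs1
    | succ n ih =>
      funext a
      rw [hsrec (n + 1) (by omega), ih, hattack, Function.iterate_succ_apply']
      rfl
  obtain ⟨x, hx₀, hxσ, hx⟩ := tendsto_iterate_step (fun a => (hσ a).1) fun a b => (hπ a b).1
  intro a
  refine ⟨x a, ⟨hx₀ a, (hxσ a).trans (hσ a).2⟩, ?_⟩
  rw [← tendsto_add_atTop_iff_nat 1]
  simpa only [hiter] using tendsto_pi_nhds.1 hx a

/-- For every weighted argumentation graph with a finite set of arguments,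
initial weights in `[0,1]` and attack strengths in `[0,1]`, the weighted h-Categorizer
sequence converges: for every argument `a`, the sequence `(s(a)⁽ⁿ⁾)_{n ≥ 1}` has a limit
in `[0,1]` as `n → ∞`. -/
theorem hCategorizer_converges
    {A : Type*} [Fintype A] [Nonempty A]
    (σ : A → ℝ) (hσ : ∀ a, σ a ∈ Set.Icc (0 : ℝ) 1)
    (R : A → A → Prop) [DecidableRel R]
    (π : A → A → ℝ) (hπ : ∀ a b, π a b ∈ Set.Icc (0 : ℝ) 1)
    (hπ0 : ∀ a b, ¬ R a b → π a b = 0)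
    (s : ℕ → A → ℝ)
    (hs1 : ∀ a, s 1 a = σ a)
    (hsrec : ∀ n ≥ 1, ∀ a, s (n + 1) a =
      σ a / (1 + ∑ b ∈ Finset.univ.filter (fun b => R b a), π b a * s n b)) :
    ∀ a, ∃ L ∈ Set.Icc (0 : ℝ) 1,
      Filter.Tendsto (fun n => s n a) Filter.atTop (nhds L) :=
  hCategorizer_converges_general σ hσ R π hπ hπ0 s hs1 hsrec
end
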